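/- arXiv:2509.21139 — 7 statements merged into one kernel-verified Lean document; each statement's English description precedes it below -/
import Mathlib

section
/- Let H be a perfect group, Z a subgroup of Z(H), g an element of H, and α an automorphism of H such that α(h)·(g h g⁻¹)⁻¹ ∈ Z for every h ∈ H (i.e., α agrees with conjugation by g modulo Z). Then α equals the inner automorphism given by conjugation by g; in particular α is inner. -/
/-!
If `α` agrees with conjugation by `g` modulo central elements, then `h ↦ (g⁻¹ α(h) g) h⁻¹` is a
homomorphism from `H` into its centre. A perfect group has no nontrivial homomorphism into an
abelian group, so this map is trivial and `α` is conjugation by `g`.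
-/

theorem MonoidHom.eq_one_of_commutator_eq_top {G A : Type*} [Group G] [CommGroup A]
    (hG : commutator G = ⊤) (f : G →* A) : f = 1 := by
  ext x
  exact Abelianization.commutator_subset_ker f (hG ▸ Subgroup.mem_top x)

section CentralDeviation

variable {H : Type*} [Group H] (f : H →* H)

def MonoidHom.centralDeviation (hf : ∀ h, f h * h⁻¹ ∈ Subgroup.center H) :
    H →* Subgroup.center H where
  toFun h := ⟨f h * h⁻¹, hf h⟩
  map_one' := by simp
  map_mul' a b := Subtype.ext <| by
    have hb := Subgroup.mem_center_iff.mp (hf b)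
    calc f (a * b) * (a * b)⁻¹ = f a * ((f b * b⁻¹) * a⁻¹) := by rw [map_mul]; group
      _ = f a * (a⁻¹ * (f b * b⁻¹)) := by rw [hb a⁻¹]
      _ = f a * a⁻¹ * (f b * b⁻¹) := by group

open scoped IsMulCommutative in
theorem MonoidHom.eq_id_of_mul_inv_mem_center (hH : commutator H = ⊤)
    (hf : ∀ h, f h * h⁻¹ ∈ Subgroup.center H) : f = MonoidHom.id H := by
  have htriv := MonoidHom.eq_one_of_commutator_eq_top hH (f.centralDeviation hf)
  ext h
  simpa [MonoidHom.centralDeviation, mul_inv_eq_one] using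
    congrArg Subtype.val (DFunLike.congr_fun htriv h)

end CentralDeviation

/-- Let `H` be a perfect group, `Z ≤ Z(H)`, `g ∈ H`, and `α` an automorphism of
`H` agreeing with conjugation by `g` modulo `Z`.  Then `α` equals the inner
automorphism of conjugation by `g`; in particular `α` is inner. -/
theorem aut_eq_conj_of_agree_mod_center (H : Type*) [Group H]
    (hperf : commutator H = ⊤) (Z : Subgroup H) (hZ : Z ≤ Subgroup.center H)
    (g : H) (α : MulAut H)
    (hα : ∀ h : H, α h * (g * h * g⁻¹)⁻¹ ∈ Z) :
    α = MulAut.conj g := by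
  set β : H →* H := ((MulAut.conj g)⁻¹ * α).toMonoidHom
  have hβ : ∀ h, β h = g⁻¹ * α h * g := fun h => by
    simp [β, MulAut.mul_apply, MulAut.inv_def, MulAut.conj_symm_apply, mul_assoc]
  have hβ_central : ∀ h, β h * h⁻¹ ∈ Subgroup.center H := fun h => by
    have hconj : β h * h⁻¹ = g⁻¹ * (α h * (g * h * g⁻¹)⁻¹) * g⁻¹⁻¹ := by rw [hβ]; group
    rw [hconj]
    exact (Subgroup.center H).normal_of_characteristic.conj_mem _ (hZ (hα h)) g⁻¹
  have hβ_id := β.eq_id_of_mul_inv_mem_center hperf hβ_central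
  ext h
  calc α h = g * β h * g⁻¹ := by rw [hβ]; group
    _ = g * h * g⁻¹ := by rw [hβ_id]; rfl
end

section
/- Fix a prime p. Let N be a finite group, A a normal p-subgroup of N, and K a normal subgroup of N whose order is coprime to p, such that K centralizes A and the centralizer C_N(A) equals the product Z(A)·K. Then: (i) every normal subgroup M of N whose order is coprime to p is contained in K; and (ii) for every x ∈ N, if the commutator [x,a] = x a x⁻¹ a⁻¹ lies in K for every a ∈ A, then x lies in the subgroup A·K. -/
open Pointwise


/-- Let `A` be a normal `p`-subgroup of the finite group `N` and `K` a normal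
subgroup of order coprime to `p` centralizing `A` with `C_N(A) = Z(A)·K`.
Then (i) every normal subgroup of `N` of order coprime to `p` is contained in
`K`, and (ii) any `x ∈ N` with `[x, a] ∈ K` for all `a ∈ A` lies in `A·K`. -/
theorem normal_p_centric_subgroup_controls (p : ℕ) (hp : p.Prime)
    (N : Type*) [Group N] [Finite N] (A K : Subgroup N) [A.Normal] [K.Normal]
    (hA : IsPGroup p A) (hK : (Nat.card K).Coprime p)
    (hKcent : K ≤ Subgroup.centralizer (A : Set N))
    (hC : Subgroup.centralizer (A : Set N)
      = (A ⊓ Subgroup.centralizer (A : Set N)) ⊔ K) :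
    (∀ M : Subgroup N, M.Normal → (Nat.card M).Coprime p → M ≤ K) ∧
    (∀ x : N, (∀ a ∈ A, x * a * x⁻¹ * a⁻¹ ∈ K) → x ∈ A ⊔ K) := by
  -- Key: any element of A lying in a subgroup of order coprime to p is 1.
  have key : ∀ (M : Subgroup N), (Nat.card M).Coprime p →
      ∀ x : N, x ∈ M → x ∈ A → x = 1 := by
    intro M hM x hxM hxA
    obtain ⟨n, hn⟩ := hA ⟨x, hxA⟩
    have hn' : x ^ p ^ n = 1 := by
      have := congrArg (Subtype.val) hn
      simpa using this
    have h1 : orderOf x ∣ p ^ n := orderOf_dvd_of_pow_eq_one hn'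
    have h2 : orderOf x ∣ Nat.card M := by
      have hc : (⟨x, hxM⟩ : M) ^ Nat.card M = 1 := pow_card_eq_one'
      have hc' : x ^ Nat.card M = 1 := by
        have h := congrArg Subtype.val hc
        simp only [SubmonoidClass.coe_pow, OneMemClass.coe_one] at h
        exact h
      exact orderOf_dvd_of_pow_eq_one hc'
    have hcop : (Nat.card M).Coprime (p ^ n) := hM.pow_right n
    have : orderOf x ∣ 1 := hcop ▸ Nat.dvd_gcd h2 h1
    have : orderOf x = 1 := Nat.dvd_one.mp this
    exact orderOf_eq_one_iff.mp this
  constructor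
  · intro M hMnorm hMc m hm
    -- m centralizes A
    have hmc : m ∈ Subgroup.centralizer (A : Set N) := by
      rw [Subgroup.mem_centralizer_iff]
      intro a ha
      have hA' : m * a * m⁻¹ * a⁻¹ ∈ A :=
        mul_mem (‹A.Normal›.conj_mem a ha m) (inv_mem ha)
      have hM' : m * a * m⁻¹ * a⁻¹ ∈ M := by
        have h1 : a * m⁻¹ * a⁻¹ ∈ M := hMnorm.conj_mem m⁻¹ (inv_mem hm) a
        have : m * (a * m⁻¹ * a⁻¹) ∈ M := mul_mem hm h1
        simpa [mul_assoc] using this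
      have h1 : m * a * m⁻¹ * a⁻¹ = 1 := key M hMc _ hM' hA'
      rw [mul_inv_eq_one, mul_inv_eq_iff_eq_mul] at h1
      exact h1.symm
    rw [hC] at hmc
    -- decompose m = a * k
    have hmul : m ∈ (↑(A ⊓ Subgroup.centralizer (A : Set N)) : Set N) * (↑K : Set N) := by
      rw [← Subgroup.mul_normal]
      exact hmc
    obtain ⟨a, ha, k, hk, hak⟩ := hmul
    -- pass to the quotient N/K
    let π := QuotientGroup.mk' K
    have hπk : π k = 1 := (QuotientGroup.eq_one_iff k).mpr hk
    have hπm : π m = π a := by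
      rw [← hak, map_mul, hπk, mul_one]
    obtain ⟨n, hn⟩ := hA ⟨a, ha.1⟩
    have hn' : a ^ p ^ n = 1 := by
      have := congrArg (Subtype.val) hn
      simpa using this
    have h1 : orderOf (π m) ∣ p ^ n := by
      apply orderOf_dvd_of_pow_eq_one
      rw [hπm, ← map_pow, hn', map_one]
    have h2 : orderOf (π m) ∣ Nat.card M := by
      apply orderOf_dvd_of_pow_eq_one
      have hc : (⟨m, hm⟩ : M) ^ Nat.card M = 1 := pow_card_eq_one'
      have hc' : m ^ Nat.card M = 1 := by
        have h := congrArg Subtype.val hc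
        simp only [SubmonoidClass.coe_pow, OneMemClass.coe_one] at h
        exact h
      rw [← map_pow, hc', map_one]
    have hcop : (Nat.card M).Coprime (p ^ n) := hMc.pow_right n
    have hd : orderOf (π m) ∣ 1 := hcop ▸ Nat.dvd_gcd h2 h1
    have : π m = 1 := orderOf_eq_one_iff.mp (Nat.dvd_one.mp hd)
    exact (QuotientGroup.eq_one_iff m).mp this
  · intro x hx
    have hxc : x ∈ Subgroup.centralizer (A : Set N) := by
      rw [Subgroup.mem_centralizer_iff]
      intro a ha
      have hA' : x * a * x⁻¹ * a⁻¹ ∈ A :=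
        mul_mem (‹A.Normal›.conj_mem a ha x) (inv_mem ha)
      have h1 : x * a * x⁻¹ * a⁻¹ = 1 := key K hK _ (hx a ha) hA'
      rw [mul_inv_eq_one, mul_inv_eq_iff_eq_mul] at h1
      exact h1.symm
    rw [hC] at hxc
    exact sup_le_sup_right inf_le_left K hxc
end

section
/- Let p be a prime with p ≡ 1 (mod 4), let l ≥ 1, set q = p^(2^l) and r = p^(2^(l−1)), and let F be a finite field with q elements. If μ ∈ F× has multiplicative order equal to the 2-part (q−1)₂ of q − 1, then μ^(r−1) = −1. -/
/-- Let `p ≡ 1 (mod 4)` be prime, `l ≥ 1`, `q = p ^ (2 ^ l)`, `r = p ^ (2 ^ (l-1))`,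
and `F` a finite field with `q` elements.  If `μ ∈ Fˣ` has multiplicative order
equal to the 2-part `(q - 1)₂` of `q - 1`, then `μ ^ (r - 1) = -1`. -/
theorem pow_sub_one_eq_neg_one (p l : ℕ) (hp : p.Prime) (hpmod : p % 4 = 1)
    (hl : 1 ≤ l) (F : Type*) [Field F] [Fintype F]
    (hF : Fintype.card F = p ^ 2 ^ l) (μ : Fˣ)
    (hμ : orderOf μ = 2 ^ (p ^ 2 ^ l - 1).factorization 2) :
    (μ : F) ^ (p ^ 2 ^ (l - 1) - 1) = -1 := by
  set r : ℕ := p ^ 2 ^ (l - 1) with hr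
  -- q = r ^ 2
  have hq : p ^ 2 ^ l = r ^ 2 := by
    have h : l = (l - 1) + 1 := by omega
    have h2 : 2 ^ l = 2 ^ (l - 1) * 2 := by conv_lhs => rw [h, pow_succ]
    rw [hr, ← pow_mul, ← h2]
  have hr2 : 2 ≤ r := by
    have := hp.two_le
    calc 2 = 2 ^ 1 := rfl
      _ ≤ 2 ^ 2 ^ (l - 1) := Nat.pow_le_pow_right (by norm_num) (Nat.one_le_two_pow)
      _ ≤ r := Nat.pow_le_pow_left this _
  have hrmod : r % 4 = 1 := by
    rw [hr, Nat.pow_mod, hpmod, one_pow]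
    norm_num
  have hsub : p ^ 2 ^ l - 1 = (r - 1) * (r + 1) := by
    rw [hq]
    have := Nat.sq_sub_sq r 1
    simpa [mul_comm] using this
  have hr1ne : r - 1 ≠ 0 := by omega
  have hr1ne' : r + 1 ≠ 0 := by omega
  -- 2-adic valuation of r + 1 is 1
  have hval1 : (r + 1).factorization 2 = 1 := by
    have h2 : (2 : ℕ) ^ 1 ∣ r + 1 := by omega
    have h4 : ¬ (2 : ℕ) ^ 2 ∣ r + 1 := by omega
    have hle := (Nat.Prime.pow_dvd_iff_le_factorization Nat.prime_two hr1ne').mp h2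
    have hlt : ¬ 2 ≤ (r + 1).factorization 2 := fun h =>
      h4 ((Nat.Prime.pow_dvd_iff_le_factorization Nat.prime_two hr1ne').mpr h)
    omega
  set k : ℕ := (r - 1).factorization 2 with hk
  have hvalq : (p ^ 2 ^ l - 1).factorization 2 = k + 1 := by
    rw [hsub, Nat.factorization_mul hr1ne hr1ne', Finsupp.add_apply, hval1]
  -- 2^k divides r - 1
  have hdvd : (2 : ℕ) ^ k ∣ r - 1 := Nat.ordProj_dvd (r - 1) 2
  -- order of μ divides 2 * (r - 1)
  have hord : μ ^ (2 * (r - 1)) = 1 := by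
    apply orderOf_dvd_iff_pow_eq_one.mp
    rw [hμ, hvalq, pow_succ]
    simpa [mul_comm] using Nat.mul_dvd_mul hdvd (dvd_refl 2)
  have hsq : ((μ : F) ^ (r - 1)) * ((μ : F) ^ (r - 1)) = 1 := by
    have : ((μ ^ (2 * (r - 1)) : Fˣ) : F) = 1 := by rw [hord]; rfl
    rw [Units.val_pow_eq_pow_val] at this
    rw [← pow_add] at *
    convert this using 2
    omega
  have hne1 : (μ : F) ^ (r - 1) ≠ 1 := by
    intro h
    have hu : μ ^ (r - 1) = 1 := by
      ext
      rw [Units.val_pow_eq_pow_val, h, Units.val_one]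
    have hdvd2 : orderOf μ ∣ r - 1 := orderOf_dvd_of_pow_eq_one hu
    rw [hμ, hvalq] at hdvd2
    have := (Nat.Prime.pow_dvd_iff_le_factorization Nat.prime_two hr1ne).mp hdvd2
    omega
  rcases mul_self_eq_one_iff.mp hsq with h | h
  · exact absurd h hne1
  · exact h
end

section
/- Let p be a prime with p ≡ 1 (mod 4), let l ≥ 1, set q = p^(2^l) and r = p^(2^(l−1)), let F be a finite field with q elements, and let μ ∈ F× have multiplicative order equal to the 2-part (q−1)₂ of q − 1. Let ψ : SL₂(F) → SL₂(F) be the group automorphism obtained by applying the field automorphism x ↦ x^r of F to each matrix entry, and let S be the subgroup of SL₂(F) generated by the diagonal matrix diag(μ, μ⁻¹) and the matrix w = [[0,−1],[1,0]]. Then for every B ∈ S one has ψ(B) = B or ψ(B) = −B; consequently ψ induces the identity on the image of S in SL₂(F)/{±I}. -/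
open Matrix

instance : Fact (Even (Fintype.card (Fin 2))) := ⟨⟨1, by simp⟩⟩

/-!
Write `q = r ^ 2`. Since `r ≡ 1 (mod 4)`, the 2-part of `q - 1 = (r - 1)(r + 1)` is twice that of
`r - 1`, so `μ ^ (r - 1)` has order exactly 2, i.e. `μ ^ r = -μ`. Hence `ψ` negates
`diag(μ, μ⁻¹)`, and it fixes `w` because `r` is odd. The elements `B` with `ψ B = ±B` form a
subgroup, which therefore contains `S`.
-/

namespace Nat

theorem factorization_two_sq_sub_one {r : ℕ} (hr : 1 < r) (hr4 : r % 4 = 1) :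
    (r ^ 2 - 1).factorization 2 = (r - 1).factorization 2 + 1 := by
  obtain ⟨m, hm⟩ : ∃ m, r + 1 = 2 * (2 * m + 1) := ⟨r / 4, by omega⟩
  have h_succ : (r + 1).factorization 2 = 1 := by
    rw [hm, factorization_mul two_ne_zero (by omega), Finsupp.add_apply,
      prime_two.factorization_self, factorization_eq_zero_of_not_dvd (by omega)]
  rw [← one_pow 2, sq_sub_sq, one_pow, factorization_mul (by omega) (by omega),
    Finsupp.add_apply, h_succ, add_comm]

end Nat

theorem pow_eq_neg_one_of_orderOf_eq_two_pow {R : Type*} [Ring R] [NoZeroDivisors R] {x : R}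
    {n : ℕ} (hn : n ≠ 0) (hx : orderOf x = 2 ^ (n.factorization 2 + 1)) : x ^ n = -1 := by
  have h_sq : (x ^ n) ^ 2 = 1 := by
    rw [← pow_mul, ← orderOf_dvd_iff_pow_eq_one, hx, pow_succ]
    exact mul_dvd_mul_right (Nat.ordProj_dvd n 2) 2
  have h_ne : x ^ n ≠ 1 := by
    rw [Ne, ← orderOf_dvd_iff_pow_eq_one, hx]
    exact Nat.pow_succ_factorization_not_dvd hn Nat.prime_two
  exact (sq_eq_one_iff.mp h_sq).resolve_left h_ne

def MonoidHom.fixedUpToSign {G : Type*} [Group G] [HasDistribNeg G] (ψ : G →* G) :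
    Subgroup G where
  carrier := {g | ψ g = g ∨ ψ g = -g}
  one_mem' := Or.inl (map_one ψ)
  mul_mem' := by
    rintro g h (hg | hg) (hh | hh) <;> simp [hg, hh]
  inv_mem' := by
    rintro g (hg | hg) <;> simp [hg]

section EntrywisePow

variable {F : Type*} [Field F] {r : ℕ}
  {ψ : SpecialLinearGroup (Fin 2) F → SpecialLinearGroup (Fin 2) F}

theorem map_eq_neg_of_diagonal_of_pow_eq_neg
    (hψ : ∀ (B : SpecialLinearGroup (Fin 2) F) (i j : Fin 2),
      (ψ B : Matrix (Fin 2) (Fin 2) F) i j = ((B : Matrix (Fin 2) (Fin 2) F) i j) ^ r)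
    (hr : r ≠ 0) {x : Fˣ} (hx : (x : F) ^ r = -x) {a : SpecialLinearGroup (Fin 2) F}
    (ha : (a : Matrix (Fin 2) (Fin 2) F) = !![(x : F), 0; 0, ((x⁻¹ : Fˣ) : F)]) :
    ψ a = -a := by
  ext i j
  rw [hψ, SpecialLinearGroup.coe_neg, ha]
  fin_cases i <;> fin_cases j <;> simp [hx, zero_pow hr]

theorem map_eq_self_of_rotation (hψ : ∀ (B : SpecialLinearGroup (Fin 2) F) (i j : Fin 2),
      (ψ B : Matrix (Fin 2) (Fin 2) F) i j = ((B : Matrix (Fin 2) (Fin 2) F) i j) ^ r)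
    (hr : Odd r) {w : SpecialLinearGroup (Fin 2) F}
    (hw : (w : Matrix (Fin 2) (Fin 2) F) = !![0, -1; 1, 0]) :
    ψ w = w := by
  ext i j
  rw [hψ, hw]
  fin_cases i <;> fin_cases j <;> simp [hr.neg_one_pow, zero_pow hr.pos.ne']

end EntrywisePow

theorem field_aut_acts_trivially_mod_center_general (p l : ℕ) (hp : p.Prime)
    (hpmod : p % 4 = 1) (hl : 1 ≤ l) (F : Type*) [Field F] (μ : Fˣ)
    (hμ : orderOf μ = 2 ^ (p ^ 2 ^ l - 1).factorization 2)
    (ψ : Matrix.SpecialLinearGroup (Fin 2) F ≃* Matrix.SpecialLinearGroup (Fin 2) F)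
    (hψ : ∀ (B : Matrix.SpecialLinearGroup (Fin 2) F) (i j : Fin 2),
      (ψ B : Matrix (Fin 2) (Fin 2) F) i j
        = ((B : Matrix (Fin 2) (Fin 2) F) i j) ^ p ^ 2 ^ (l - 1))
    (a w : Matrix.SpecialLinearGroup (Fin 2) F)
    (ha : (a : Matrix (Fin 2) (Fin 2) F) = !![(μ : F), 0; 0, ((μ⁻¹ : Fˣ) : F)])
    (hw : (w : Matrix (Fin 2) (Fin 2) F) = !![0, -1; 1, 0]) :
    ∀ B ∈ Subgroup.closure {a, w}, ψ B = B ∨ ψ B = -B := by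
  set r := p ^ 2 ^ (l - 1)
  have hr : 1 < r := Nat.one_lt_pow (by positivity) hp.one_lt
  have hr4 : r % 4 = 1 := by simp [r, Nat.pow_mod, hpmod]
  have hq : p ^ 2 ^ l = r ^ 2 := by rw [← pow_mul, ← pow_succ, Nat.sub_add_cancel hl]
  have hμr : (μ : F) ^ r = -μ := by
    have h := pow_eq_neg_one_of_orderOf_eq_two_pow (x := (μ : F)) (n := r - 1) (by omega)
      (by rw [orderOf_units, hμ, hq, Nat.factorization_two_sq_sub_one hr hr4])
    rw [← Nat.sub_add_cancel hr.le, pow_succ, h, neg_one_mul]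
  intro B hB
  refine (Subgroup.closure_le (ψ : _ →* _).fixedUpToSign).mpr ?_ hB
  rintro _ (rfl | rfl)
  · exact Or.inr (map_eq_neg_of_diagonal_of_pow_eq_neg hψ (by omega) hμr ha)
  · exact Or.inl (map_eq_self_of_rotation hψ (Nat.odd_iff.mpr (by omega)) hw)

/-- Let `p ≡ 1 (mod 4)` be prime, `l ≥ 1`, `q = p ^ (2 ^ l)`, `r = p ^ (2 ^ (l-1))`,
`F` a finite field with `q` elements, and `μ ∈ Fˣ` of multiplicative order the
2-part of `q - 1`.  Let `ψ` be the automorphism of `SL₂(F)` applying `x ↦ x ^ r`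
entrywise, and `S = ⟨diag(μ, μ⁻¹), [[0,-1],[1,0]]⟩`.  Then `ψ B = B` or
`ψ B = -B` for every `B ∈ S`. -/
theorem field_aut_acts_trivially_mod_center (p l : ℕ) (hp : p.Prime)
    (hpmod : p % 4 = 1) (hl : 1 ≤ l) (F : Type*) [Field F] [Fintype F]
    (hF : Fintype.card F = p ^ 2 ^ l) (μ : Fˣ)
    (hμ : orderOf μ = 2 ^ (p ^ 2 ^ l - 1).factorization 2)
    (ψ : Matrix.SpecialLinearGroup (Fin 2) F ≃* Matrix.SpecialLinearGroup (Fin 2) F)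
    (hψ : ∀ (B : Matrix.SpecialLinearGroup (Fin 2) F) (i j : Fin 2),
      (ψ B : Matrix (Fin 2) (Fin 2) F) i j
        = ((B : Matrix (Fin 2) (Fin 2) F) i j) ^ p ^ 2 ^ (l - 1))
    (a w : Matrix.SpecialLinearGroup (Fin 2) F)
    (ha : (a : Matrix (Fin 2) (Fin 2) F) = !![(μ : F), 0; 0, ((μ⁻¹ : Fˣ) : F)])
    (hw : (w : Matrix (Fin 2) (Fin 2) F) = !![0, -1; 1, 0]) :
    ∀ B ∈ Subgroup.closure {a, w}, ψ B = B ∨ ψ B = -B :=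
  field_aut_acts_trivially_mod_center_general p l hp hpmod hl F μ hμ ψ hψ a w ha hw
end

section
/- Let q be an odd prime power with q ≡ 1 (mod 4), let F be a finite field with q elements, and let μ ∈ F× have multiplicative order 2^k, where 2^k = (q−1)₂ is the 2-part of q − 1. Then the subgroup S of SL₂(F) generated by the diagonal matrix diag(μ, μ⁻¹) and the matrix w = [[0,−1],[1,0]] has order 2^(k+1) and is a Sylow 2-subgroup of SL₂(F). -/
/-! `A = ⟨a⟩` is cyclic of order `2^k`, and `w` inverts `a` with `w² = -1 ∈ A`. Hence `w`
normalizes `A`, and `w ∉ A` because `A` is abelian while `a ≠ a⁻¹`; so `A` has index 2 in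
`⟨a, w⟩ = A ⟨w⟩`, which has order `2^(k+1)`. On the other hand
`|SL₂(F)| = q (q - 1) (q + 1)` with `q` odd and `(q + 1)₂ = 2` when `q ≡ 1 (mod 4)`, so
`2^(k+1)` is also the 2-part of `|SL₂(F)|`. -/

namespace Subgroup

variable {G : Type*} [Group G] {H : Subgroup G} {a w : G}

theorem relIndex_sup_zpowers_eq_two (hN : w ∈ normalizer (H : Set G)) (hsq : w ^ 2 ∈ H)
    (hw : w ∉ H) : H.relIndex (H ⊔ zpowers w) = 2 := by
  have hpow (m : ℤ) : w ^ (2 * m) ∈ H := by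
    rw [zpow_mul]
    exact zpow_mem (mod_cast hsq) m
  refine relIndex_eq_two_iff_exists_notMem_and.mpr
    ⟨w, mem_sup_right (mem_zpowers w), hw, fun b hb => ?_⟩
  rw [← SetLike.mem_coe, coe_mul_of_right_le_normalizer_left H _ (zpowers_le.mpr hN)] at hb
  obtain ⟨h, hh, _, ⟨n, rfl⟩, rfl⟩ := hb
  obtain ⟨m, rfl | rfl⟩ := Int.even_or_odd' n
  · exact .inr (mul_mem hh (hpow m))
  · refine .inl ?_
    convert mul_mem hh (hpow (m + 1)) using 1
    rw [mul_assoc, ← zpow_add_one, mul_add_one, add_assoc, one_add_one_eq_two]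

theorem card_sup_zpowers_eq_two_mul (hN : w ∈ normalizer (H : Set G)) (hsq : w ^ 2 ∈ H)
    (hw : w ∉ H) : Nat.card (H ⊔ zpowers w : Subgroup G) = 2 * Nat.card H := by
  rw [← relIndex_bot_left, ← relIndex_mul_relIndex ⊥ H _ bot_le le_sup_left,
    relIndex_sup_zpowers_eq_two hN hsq hw, relIndex_bot_left, mul_comm]

theorem card_closure_pair_eq_two_mul_orderOf (hconj : w * a * w⁻¹ = a⁻¹)
    (hsq : w ^ 2 ∈ zpowers a) (ha : a ^ 2 ≠ 1) :
    Nat.card (closure {a, w}) = 2 * orderOf a := by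
  have hN : w ∈ normalizer (zpowers a : Set G) := by
    rw [mem_normalizer_iff_map_conj_eq, MonoidHom.map_zpowers]
    simp [hconj]
  have hw : w ∉ zpowers a := by
    rintro ⟨n, rfl⟩
    rw [((Commute.refl a).zpow_left n).eq, mul_inv_cancel_right, eq_inv_iff_mul_eq_one] at hconj
    exact ha (by rw [sq, hconj])
  rw [Set.insert_eq, Subgroup.closure_union, ← zpowers_eq_closure, ← zpowers_eq_closure,
    card_sup_zpowers_eq_two_mul hN hsq hw, Nat.card_zpowers]

end Subgroup

theorem Nat.factorization_two_mul_sub_one_mul_add_one {q : ℕ} (hq : q % 4 = 1) (hq₁ : 1 < q) :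
    (q * (q - 1) * (q + 1)).factorization 2 = (q - 1).factorization 2 + 1 := by
  have hsucc : (q + 1).factorization 2 = 1 := by
    rw [show q + 1 = 2 * ((q + 1) / 2) by omega, Nat.factorization_mul two_ne_zero (by omega),
      Finsupp.add_apply, Nat.prime_two.factorization_self,
      Nat.factorization_eq_zero_of_not_dvd (by omega)]
  have hq_ne : q ≠ 0 := by omega
  have hq_pred : q - 1 ≠ 0 := by omega
  rw [Nat.factorization_mul (mul_ne_zero hq_ne hq_pred) q.succ_ne_zero,
    Nat.factorization_mul hq_ne hq_pred, Finsupp.add_apply, Finsupp.add_apply,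
    Nat.factorization_eq_zero_of_not_dvd (show ¬ 2 ∣ q by omega), hsucc, zero_add]

theorem Nat.two_le_factorization_two_sub_one {q : ℕ} (hq : q % 4 = 1) (hq₁ : 1 < q) :
    2 ≤ (q - 1).factorization 2 :=
  (Nat.prime_two.pow_dvd_iff_le_factorization (by omega)).mp (show 2 ^ 2 ∣ q - 1 by omega)

theorem pow_two_pow_pred_eq_neg_one {R : Type*} [CommRing R] [IsDomain R] {x : Rˣ} {k : ℕ}
    (hk : k ≠ 0) (hx : orderOf x = 2 ^ k) : x ^ 2 ^ (k - 1) = -1 := by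
  have hprim : IsPrimitiveRoot (x : R) (2 ^ k) := by
    rw [← hx, IsPrimitiveRoot.coe_units_iff]; exact IsPrimitiveRoot.orderOf x
  have := hprim.pow_of_dvd (pow_ne_zero _ two_ne_zero) (pow_dvd_pow 2 (k.sub_le 1))
  rw [Nat.pow_div (k.sub_le 1) two_pos, Nat.sub_sub_self (Nat.one_le_iff_ne_zero.mpr hk),
    pow_one] at this
  exact Units.ext (by simpa using this.eq_neg_one_of_two_right)

namespace Matrix.SpecialLinearGroup

theorem card_mul_card_units (n : Type*) [Fintype n] [DecidableEq n] [Nonempty n]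
    (F : Type*) [Field F] :
    Nat.card (SpecialLinearGroup n F) * Nat.card Fˣ = Nat.card (GL n F) := by
  have hrange : (toGL : SpecialLinearGroup n F →* GL n F).range =
      (GeneralLinearGroup.det : GL n F →* Fˣ).ker := by
    ext g
    refine ⟨fun ⟨A, hA⟩ => hA ▸ coeToGL_det A,
      fun hg => ⟨⟨g, ?_⟩, Units.ext rfl⟩⟩
    simpa [Units.ext_iff] using hg
  rw [Nat.card_congr (MonoidHom.ofInjective toGL_injective).toEquiv, hrange,
    ← GeneralLinearGroup.det.ker.card_mul_index, Subgroup.index_ker,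
    MonoidHom.range_eq_top_of_surjective _ GeneralLinearGroup.det_surjective, Subgroup.card_top]

theorem card_fin_two (F : Type*) [Field F] [Fintype F] :
    Nat.card (SpecialLinearGroup (Fin 2) F) =
      Fintype.card F * (Fintype.card F - 1) * (Fintype.card F + 1) := by
  have h := card_mul_card_units (Fin 2) F
  rw [card_GL_field, Nat.card_units, Nat.card_eq_fintype_card (α := F), Fin.prod_univ_two] at h
  set q := Fintype.card F
  have hq : 1 < q := Fintype.one_lt_card
  refine Nat.eq_of_mul_eq_mul_right (Nat.sub_pos_of_lt hq) (h.trans ?_)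
  have h0 : q ^ ((0 : Fin 2) : ℕ) ≤ q ^ 2 := Nat.pow_le_pow_right (by omega) (by simp)
  have h1 : q ^ ((1 : Fin 2) : ℕ) ≤ q ^ 2 := Nat.pow_le_pow_right (by omega) (by simp)
  zify [h0, h1, hq.le]
  simp only [Fin.val_zero, Fin.val_one, pow_zero, pow_one]
  ring

def diagHom (F : Type*) [Field F] : Fˣ →* SpecialLinearGroup (Fin 2) F where
  toFun u := ⟨!![(u : F), 0; 0, ((u⁻¹ : Fˣ) : F)], by simp [det_fin_two]⟩
  map_one' := by ext i j; fin_cases i <;> fin_cases j <;> simp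
  map_mul' u v := Subtype.ext <| by
    change _ = (!![(u : F), 0; 0, ((u⁻¹ : Fˣ) : F)] : Matrix (Fin 2) (Fin 2) F) *
      !![(v : F), 0; 0, ((v⁻¹ : Fˣ) : F)]
    simp [mul_comm]

variable {F : Type*} [Field F]

theorem coe_diagHom (u : Fˣ) :
    (diagHom F u : Matrix (Fin 2) (Fin 2) F) = !![(u : F), 0; 0, ((u⁻¹ : Fˣ) : F)] := rfl

theorem diagHom_injective : Function.Injective (diagHom F) := fun u v h =>
  Units.ext (by simpa [coe_diagHom] using congr($h 0 0))

variable {w : SpecialLinearGroup (Fin 2) F}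

theorem conj_diagHom (hw : (w : Matrix (Fin 2) (Fin 2) F) = !![0, -1; 1, 0]) (u : Fˣ) :
    w * diagHom F u * w⁻¹ = (diagHom F u)⁻¹ := by
  rw [mul_inv_eq_iff_eq_mul, ← map_inv]
  ext i j; fin_cases i <;> fin_cases j <;> simp [hw, coe_diagHom]

theorem sq_eq_diagHom_neg_one (hw : (w : Matrix (Fin 2) (Fin 2) F) = !![0, -1; 1, 0]) :
    w ^ 2 = diagHom F (-1) := by
  ext i j; fin_cases i <;> fin_cases j <;> simp [sq, hw, coe_diagHom]

end Matrix.SpecialLinearGroup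

open Matrix.SpecialLinearGroup in
/-- Let `q ≡ 1 (mod 4)` be an odd prime power, `F` a finite field with `q`
elements, and `μ ∈ Fˣ` of multiplicative order `2 ^ k` where `2 ^ k` is the
2-part of `q - 1`.  Then the subgroup of `SL₂(F)` generated by `diag(μ, μ⁻¹)`
and `w = [[0,-1],[1,0]]` has order `2 ^ (k + 1)` and is a Sylow 2-subgroup. -/
theorem closure_is_sylow_two_subgroup (F : Type*) [Field F] [Fintype F]
    (hq : Fintype.card F % 4 = 1) (k : ℕ)
    (hk : k = (Fintype.card F - 1).factorization 2) (μ : Fˣ)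
    (hμ : orderOf μ = 2 ^ k)
    (a w : Matrix.SpecialLinearGroup (Fin 2) F)
    (ha : (a : Matrix (Fin 2) (Fin 2) F) = !![(μ : F), 0; 0, ((μ⁻¹ : Fˣ) : F)])
    (hw : (w : Matrix (Fin 2) (Fin 2) F) = !![0, -1; 1, 0]) :
    Nat.card (Subgroup.closure {a, w}) = 2 ^ (k + 1) ∧
    ∃ P : Sylow 2 (Matrix.SpecialLinearGroup (Fin 2) F),
      (P : Subgroup (Matrix.SpecialLinearGroup (Fin 2) F))
        = Subgroup.closure {a, w} := by
  have hq₁ : 1 < Fintype.card F := Fintype.one_lt_card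
  have hk₂ : 2 ≤ k := hk ▸ Nat.two_le_factorization_two_sub_one hq hq₁
  have ha' : a = diagHom F μ := Subtype.ext ha
  have horder : orderOf a = 2 ^ k := by rw [ha', orderOf_injective _ diagHom_injective μ, hμ]
  have hsq : w ^ 2 ∈ Subgroup.zpowers a := by
    rw [sq_eq_diagHom_neg_one hw, ← pow_two_pow_pred_eq_neg_one (by omega) hμ, map_pow, ← ha']
    exact pow_mem (Subgroup.mem_zpowers a) _
  have ha₂ : a ^ 2 ≠ 1 := pow_ne_one_of_lt_orderOf two_ne_zero <|
    horder ▸ lt_of_lt_of_le (by norm_num) (Nat.pow_le_pow_right two_pos hk₂)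
  have hcard : Nat.card (Subgroup.closure {a, w}) = 2 ^ (k + 1) := by
    rw [Subgroup.card_closure_pair_eq_two_mul_orderOf (ha' ▸ conj_diagHom hw μ) hsq ha₂,
      horder, pow_succ']
  refine ⟨hcard, Sylow.ofCard _ ?_, Sylow.coe_ofCard _ _⟩
  rw [hcard, card_fin_two, Nat.factorization_two_mul_sub_one_mul_add_one hq hq₁, hk]
end

section
/- Let n ≥ 3 be odd, let k ≥ 2, let r be an odd integer, and let m be an integer. In ℤ^(n+1) with standard basis e₁, …, e_{n+1}, set v = e₁ + e₂ + ⋯ + e_n − n·e_{n+1}. Suppose a ≠ b are indices in {1, …, n+1} and i ∈ {1, …, n} are such that every coordinate of (e_a − e_b) − r·(e_i − e_{i+1}) − m·v is divisible by 2^k. Then 2^k divides m. -/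
set_option maxHeartbeats 1000000 in
/-- Coroot-lattice computation in type `A_n`, `n` odd.  In `ℤ^(n+1)` let
`v = e₁ + ⋯ + e_n - n·e_{n+1}`.  If `a ≠ b`, `r` is odd, and every coordinate
of `(e_a - e_b) - r·(e_i - e_{i+1}) - m·v` is divisible by `2^k` (with `k ≥ 2`),
then `2^k ∣ m`. -/
theorem coroot_computation_type_A (n k : ℕ) (hn3 : 3 ≤ n) (hnodd : Odd n)
    (hk : 2 ≤ k) (r m : ℤ) (hr : Odd r)
    (a b : Fin (n + 1)) (hab : a ≠ b) (i : ℕ) (hi : i + 1 ≤ n)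
    (hdiv : ∀ c : Fin (n + 1),
      (2 ^ k : ℤ) ∣
        (((if c = a then (1 : ℤ) else 0) - (if c = b then (1 : ℤ) else 0))
          - r * ((if c = (⟨i, by omega⟩ : Fin (n + 1)) then (1 : ℤ) else 0)
              - (if c = (⟨i + 1, by omega⟩ : Fin (n + 1)) then (1 : ℤ) else 0))
          - m * (if (c : ℕ) < n then (1 : ℤ) else -(n : ℤ)))) :
    (2 ^ k : ℤ) ∣ m := by
  by_cases hn : n = 3
  · -- n = 3 : finite case analysis
    subst hn
    obtain ⟨s, hs⟩ := hr
    have h4 : (4 : ℤ) ∣ 2 ^ k := by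
      have h := pow_dvd_pow (2 : ℤ) hk
      norm_num at h
      exact h
    have hi' : i ≤ 2 := by omega
    fin_cases a <;> fin_cases b <;> interval_cases i <;>
      first
      | exact absurd rfl hab
      | (have g0 := hdiv 0
         have g1 := hdiv 1
         have g2 := hdiv 2
         have g3 := hdiv 3
         norm_num [Fin.ext_iff, dvd_neg] at g0 g1 g2 g3
         first
         | assumption
         | (exfalso
            have h0 := h4.trans g0
            have h1 := h4.trans g1
            have h2 := h4.trans g2
            have h3 := h4.trans g3
            omega))
  · -- n ≥ 5 : there is a free coordinate
    have hn5 : 5 ≤ n := by obtain ⟨w, hw⟩ := hnodd; omega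
    have hcard : ({(a : ℕ), (b : ℕ), i, i + 1} : Finset ℕ).card ≤ 4 := by
      have hc1 := Finset.card_insert_le (a : ℕ) (insert (b : ℕ) (insert i ({i+1} : Finset ℕ)))
      have hc2 := Finset.card_insert_le (b : ℕ) (insert i ({i+1} : Finset ℕ))
      have hc3 := Finset.card_insert_le i ({i+1} : Finset ℕ)
      have hc4 : ({i+1} : Finset ℕ).card = 1 := Finset.card_singleton _
      omega
    have hns : ¬ (Finset.range n ⊆ ({(a : ℕ), (b : ℕ), i, i + 1} : Finset ℕ)) := by
      intro h
      have := Finset.card_le_card h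
      rw [Finset.card_range] at this
      omega
    obtain ⟨j, hjr, hjS⟩ := Finset.not_subset.mp hns
    rw [Finset.mem_range] at hjr
    simp only [Finset.mem_insert, Finset.mem_singleton, not_or] at hjS
    obtain ⟨hja, hjb, hji, hji1⟩ := hjS
    have hc := hdiv ⟨j, by omega⟩
    rw [if_neg (by simp [Fin.ext_iff]; omega),
        if_neg (by simp [Fin.ext_iff]; omega),
        if_neg (by simp [Fin.ext_iff]; omega),
        if_neg (by simp [Fin.ext_iff]; omega),
        if_pos (by simpa using hjr)] at hc
    simpa using hc
end

section
/- Let n ≥ 3, k ≥ 2, and let r and j be integers. In ℤ^n with standard basis e₁, …, e_n, define v by v_c = (−1)^(c+1) for 1 ≤ c ≤ n, and let α = e_i − e_{i+1} for some 1 ≤ i ≤ n−1 or α = e_n. Suppose β ∈ ℤ^n has every coordinate in {−1, 0, 1}, and every coordinate of β − r·α − 2^(k−1)·j·v is divisible by 2^k. Then j is even. -/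
/-- Coroot-lattice computation in type `C_n`.  In `ℤ^n` let `v` have coordinates
`(-1)^(c+1)` (1-indexed), and let `α` be a simple coroot of type `B_n`
(`e_i - e_{i+1}` or `e_n`).  If `β` has all coordinates in `{-1, 0, 1}` and
every coordinate of `β - r·α - 2^(k-1)·j·v` is divisible by `2^k` (with
`k ≥ 2`, `n ≥ 3`), then `j` is even. -/
theorem coroot_computation_type_C (n k : ℕ) (hn : 3 ≤ n) (hk : 2 ≤ k)
    (r j : ℤ) (α : Fin n → ℤ)
    (hα : (∃ (i : ℕ) (_ : i + 1 < n), α = fun c : Fin n =>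
            (if (c : ℕ) = i then (1 : ℤ) else 0)
              - (if (c : ℕ) = i + 1 then (1 : ℤ) else 0))
        ∨ α = fun c : Fin n => if (c : ℕ) = n - 1 then (1 : ℤ) else 0)
    (β : Fin n → ℤ) (hβ : ∀ c, β c = -1 ∨ β c = 0 ∨ β c = 1)
    (hdiv : ∀ c : Fin n,
      (2 ^ k : ℤ) ∣ (β c - r * α c - 2 ^ (k - 1) * j * (-1 : ℤ) ^ (c : ℕ))) :
    Even j := by
  -- find a coordinate where α vanishes
  obtain ⟨c, hc⟩ : ∃ c : Fin n, α c = 0 := by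
    rcases hα with ⟨i, hi, rfl⟩ | rfl
    · by_cases h : i = 0
      · exact ⟨⟨2, by omega⟩, show (if (2 : ℕ) = i then (1 : ℤ) else 0)
          - (if (2 : ℕ) = i + 1 then (1 : ℤ) else 0) = 0 by
            rw [if_neg (by omega), if_neg (by omega)]; norm_num⟩
      · exact ⟨⟨0, by omega⟩, show (if (0 : ℕ) = i then (1 : ℤ) else 0)
          - (if (0 : ℕ) = i + 1 then (1 : ℤ) else 0) = 0 by
            rw [if_neg (by omega), if_neg (by omega)]; norm_num⟩
    · exact ⟨⟨0, by omega⟩, show (if (0 : ℕ) = n - 1 then (1 : ℤ) else 0) = 0 by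
        rw [if_neg (by omega)]⟩
  have hdc := hdiv c
  rw [hc, mul_zero, sub_zero] at hdc
  set s : ℤ := (-1 : ℤ) ^ (c : ℕ) with hs
  have hs2 : s = 1 ∨ s = -1 := by
    rcases Nat.even_or_odd (c : ℕ) with h | h
    · exact Or.inl (Even.neg_one_pow h)
    · exact Or.inr (Odd.neg_one_pow h)
  have hpow : (2 : ℤ) ^ k = 2 ^ (k - 1) * 2 := by
    rw [← pow_succ]; congr 1; omega
  have hdvd1 : (2 : ℤ) ^ (k - 1) ∣ 2 ^ k := pow_dvd_pow 2 (by omega)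
  have hd1 : (2 : ℤ) ^ (k - 1) ∣ β c := by
    have h1 : (2 : ℤ) ^ (k - 1) ∣ β c - 2 ^ (k - 1) * j * s := hdvd1.trans hdc
    have h2 : (2 : ℤ) ^ (k - 1) ∣ 2 ^ (k - 1) * j * s := by
      exact Dvd.dvd.mul_right (Dvd.dvd.mul_right dvd_rfl j) s
    have := dvd_add h1 h2
    simpa using this
  have hβc : β c = 0 := by
    have h2 : (2 : ℤ) ≤ 2 ^ (k - 1) := by
      calc (2 : ℤ) = 2 ^ 1 := (pow_one 2).symm
        _ ≤ 2 ^ (k - 1) := pow_le_pow_right₀ (by norm_num) (by omega)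
    rcases hβ c with h | h | h
    · exfalso
      have := Int.le_of_dvd (by omega) ((dvd_neg).2 hd1)
      omega
    · exact h
    · exfalso
      have := Int.le_of_dvd (by omega) hd1
      omega
  rw [hβc, zero_sub, dvd_neg, hpow] at hdc
  have h2js : (2 : ℤ) ∣ j * s := by
    have hpos : (0 : ℤ) < 2 ^ (k - 1) := by positivity
    have : 2 ^ (k - 1) * 2 ∣ 2 ^ (k - 1) * (j * s) := by
      rw [← mul_assoc]; exact hdc
    exact (mul_dvd_mul_iff_left hpos.ne').mp this
  obtain ⟨m, hm⟩ := h2js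
  rcases hs2 with h | h <;> rw [h] at hm
  · exact ⟨m, by omega⟩
  · exact ⟨-m, by omega⟩
end
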